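/- arXiv:2002.01439 — 8 statements merged into one kernel-verified Lean document; each statement's English description precedes it below -/
import Mathlib

section
/- For all t, s ∈ [0,1], the Green's function satisfies G(t,s) ≥ 0. -/
open MeasureTheory Set Filter

noncomputable def G (α t s : ℝ) : ℝ :=
  if s ≤ t then (t * (1 - s) ^ (α - 1) - (t - s) ^ (α - 1)) / Real.Gamma α
  else t * (1 - s) ^ (α - 1) / Real.Gamma α

noncomputable def Psi (α s : ℝ) : ℝ := (1 - s) ^ (α - 1) / Real.Gamma α

/-- Lemma 2.6 (i): the Green's function is nonnegative on `[0,1] × [0,1]`. -/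
theorem green_nonneg (α : ℝ) (hα₁ : 2 < α) (hα₂ : α ≤ 3) :
    ∀ t ∈ Icc (0:ℝ) 1, ∀ s ∈ Icc (0:ℝ) 1, 0 ≤ G α t s := by
  intro t ht s hs
  obtain ⟨ht0, ht1⟩ := ht
  obtain ⟨hs0, hs1⟩ := hs
  have hΓ : 0 < Real.Gamma α := Real.Gamma_pos_of_pos (by linarith)
  unfold G
  split_ifs with h
  · apply div_nonneg _ hΓ.le
    rw [sub_nonneg]
    have hts : 0 ≤ t - s := by linarith
    have h1s : 0 ≤ 1 - s := by linarith
    have key : t - s ≤ t * (1 - s) := by nlinarith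
    calc (t - s) ^ (α - 1) ≤ (t * (1 - s)) ^ (α - 1) :=
          Real.rpow_le_rpow hts key (by linarith)
      _ = t ^ (α - 1) * (1 - s) ^ (α - 1) := Real.mul_rpow ht0 h1s
      _ ≤ t * (1 - s) ^ (α - 1) := by
          apply mul_le_mul_of_nonneg_right _ (Real.rpow_nonneg h1s _)
          rcases eq_or_lt_of_le ht0 with h0 | h0
          · simp [← h0, Real.zero_rpow (by linarith : α - 1 ≠ 0)]
          · calc t ^ (α - 1) ≤ t ^ (1:ℝ) :=
                  Real.rpow_le_rpow_of_exponent_ge h0 ht1 (by linarith)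
              _ = t := Real.rpow_one t
  · apply div_nonneg _ hΓ.le
    exact mul_nonneg ht0 (Real.rpow_nonneg (by linarith) _)
end

section
/- For all (t,s) ∈ [0,1]×[0,1], the Green's function satisfies G(t,s) ≤ Ψ(s). -/
open MeasureTheory Set Filter

/-- Lemma 2.6 (ii), upper bound: `G(t,s) ≤ Ψ(s)` on `[0,1] × [0,1]`. -/
theorem green_le_Psi (α : ℝ) (hα₁ : 2 < α) (hα₂ : α ≤ 3) :
    ∀ t ∈ Icc (0:ℝ) 1, ∀ s ∈ Icc (0:ℝ) 1, G α t s ≤ Psi α s := by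
  intro t ht s hs
  have hΓ : 0 < Real.Gamma α := Real.Gamma_pos_of_pos (by linarith)
  have h1s : 0 ≤ (1 - s) ^ (α - 1) := Real.rpow_nonneg (by linarith [hs.2]) _
  unfold G Psi
  split_ifs with h
  · have hts : 0 ≤ (t - s) ^ (α - 1) := Real.rpow_nonneg (by linarith) _
    apply (div_le_div_iff_of_pos_right hΓ).mpr
    nlinarith [mul_nonneg (sub_nonneg.mpr ht.2) h1s]
  · apply (div_le_div_iff_of_pos_right hΓ).mpr
    nlinarith [mul_nonneg (sub_nonneg.mpr ht.2) h1s]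
end

section
/- For all (t,s) ∈ [0,1]×[0,1], the Green's function satisfies G(t,s) ≥ (t − t^(α−1))·Ψ(s). -/
open MeasureTheory Set Filter

/-- Lemma 2.6 (ii), lower bound: `(t − t^(α−1))·Ψ(s) ≤ G(t,s)` on `[0,1] × [0,1]`. -/
theorem green_ge (α : ℝ) (hα₁ : 2 < α) (hα₂ : α ≤ 3) :
    ∀ t ∈ Icc (0:ℝ) 1, ∀ s ∈ Icc (0:ℝ) 1, (t - t ^ (α - 1)) * Psi α s ≤ G α t s := by
  intro t ht s hs
  obtain ⟨ht0, ht1⟩ := ht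
  obtain ⟨hs0, hs1⟩ := hs
  have hΓ : 0 < Real.Gamma α := Real.Gamma_pos_of_pos (by linarith)
  have hexp : (0:ℝ) ≤ α - 1 := by linarith
  have h1s : (0:ℝ) ≤ 1 - s := by linarith
  unfold G Psi
  split_ifs with h
  · have key : (t - s) ^ (α - 1) ≤ t ^ (α - 1) * (1 - s) ^ (α - 1) := by
      rw [← Real.mul_rpow ht0 h1s]
      exact Real.rpow_le_rpow (by linarith) (by nlinarith) hexp
    rw [mul_div_assoc', div_le_div_iff₀ hΓ hΓ]
    nlinarith [Real.rpow_nonneg h1s (α - 1)]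
  · have ht' : (0:ℝ) ≤ t ^ (α - 1) := Real.rpow_nonneg ht0 (α - 1)
    have h1s' : (0:ℝ) ≤ (1 - s) ^ (α - 1) := Real.rpow_nonneg h1s (α - 1)
    rw [mul_div_assoc', div_le_div_iff₀ hΓ hΓ]
    nlinarith [mul_nonneg (mul_nonneg ht' h1s') hΓ.le]
end

section
/- For all t, s ∈ [0,1], the kernel satisfies H(t,s) ≥ 0. -/
open MeasureTheory Set Filter

/-- Integral of `f` over `[0,1]` against the finite signed measure `ν`
(via its Jordan decomposition). -/
noncomputable def stInt (ν : MeasureTheory.SignedMeasure ℝ) (f : ℝ → ℝ) : ℝ :=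
  ∫ t in Icc (0:ℝ) 1, f t ∂ν.toJordanDecomposition.posPart
    - ∫ t in Icc (0:ℝ) 1, f t ∂ν.toJordanDecomposition.negPart

noncomputable def gA (α : ℝ) (ν : MeasureTheory.SignedMeasure ℝ) (s : ℝ) : ℝ :=
  stInt ν (fun t => G α t s)

noncomputable def Lam (η μ₀ β : ℝ) (ν : MeasureTheory.SignedMeasure ℝ) : ℝ :=
  μ₀ * η + β * stInt ν (fun t => t)

noncomputable def Hker (α η μ₀ β : ℝ) (ν : MeasureTheory.SignedMeasure ℝ) (t s : ℝ) : ℝ :=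
  β * t / (1 - Lam η μ₀ β ν) * gA α ν s
    + μ₀ * t / (1 - Lam η μ₀ β ν) * G α η s + G α t s

noncomputable def Phi (α η μ₀ β : ℝ) (ν : MeasureTheory.SignedMeasure ℝ) (s : ℝ) : ℝ :=
  β / (1 - Lam η μ₀ β ν) * gA α ν s
    + (μ₀ - Lam η μ₀ β ν + 1) / (1 - Lam η μ₀ β ν) * Psi α s

noncomputable def rho (α η t : ℝ) : ℝ := (η - η ^ (α - 1)) * (t - t ^ (α - 1))

noncomputable def tau1 (α η μ₀ β : ℝ) (ν : MeasureTheory.SignedMeasure ℝ) : ℝ :=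
  ∫ s in Icc (0:ℝ) 1, rho α η s * Phi α η μ₀ β ν s

noncomputable def tau2 (α η μ₀ β : ℝ) (ν : MeasureTheory.SignedMeasure ℝ) : ℝ :=
  ∫ s in Icc (0:ℝ) 1, Phi α η μ₀ β ν s


lemma G_nonneg (α t s : ℝ) (hα₁ : 2 < α) (ht : t ∈ Icc (0:ℝ) 1) (hs : s ∈ Icc (0:ℝ) 1) :
    0 ≤ G α t s := by
  obtain ⟨ht0, ht1⟩ := ht
  obtain ⟨hs0, hs1⟩ := hs
  have hΓ : 0 < Real.Gamma α := Real.Gamma_pos_of_pos (by linarith)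
  have hexp : (0:ℝ) ≤ α - 1 := by linarith
  have h1s : (0:ℝ) ≤ 1 - s := by linarith
  unfold G
  split_ifs with h
  · -- s ≤ t
    apply div_nonneg _ hΓ.le
    have hkey : (t - s) ^ (α - 1) ≤ t * (1 - s) ^ (α - 1) := by
      rcases eq_or_lt_of_le ht0 with h0 | h0
      · have hs0' : s = 0 := le_antisymm (h.trans_eq h0.symm) hs0
        subst hs0'
        rw [← h0]
        simp [Real.zero_rpow (by linarith : α - 1 ≠ 0)]
      · have h1 : (t - s) ^ (α - 1) ≤ (t * (1 - s)) ^ (α - 1) := by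
          apply Real.rpow_le_rpow (by linarith) _ hexp
          nlinarith
        have h2 : (t * (1 - s)) ^ (α - 1) = t ^ (α - 1) * (1 - s) ^ (α - 1) :=
          Real.mul_rpow ht0 h1s
        have h3 : t ^ (α - 1) ≤ t := by
          nth_rewrite 2 [← Real.rpow_one t]
          exact Real.rpow_le_rpow_of_exponent_ge h0 ht1 (by linarith)
        have h4 : t ^ (α - 1) * (1 - s) ^ (α - 1) ≤ t * (1 - s) ^ (α - 1) :=
          mul_le_mul_of_nonneg_right h3 (Real.rpow_nonneg h1s _)
        linarith
    linarith
  · apply div_nonneg _ hΓ.le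
    exact mul_nonneg ht0 (Real.rpow_nonneg h1s _)

/-- Lemma 2.7 (i): the kernel `H` is nonnegative on `[0,1] × [0,1]`. -/
theorem Hker_nonneg (α η μ₀ β : ℝ) (ν : MeasureTheory.SignedMeasure ℝ)
    (hα₁ : 2 < α) (hα₂ : α ≤ 3) (hη : η ∈ Ioo (0:ℝ) 1) (hμ : 0 ≤ μ₀) (hβ : 0 ≤ β)
    (hΛ₀ : 0 ≤ Lam η μ₀ β ν) (hΛ₁ : Lam η μ₀ β ν < 1)
    (hgA : ∀ s ∈ Icc (0:ℝ) 1, 0 ≤ gA α ν s) :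
    ∀ t ∈ Icc (0:ℝ) 1, ∀ s ∈ Icc (0:ℝ) 1, 0 ≤ Hker α η μ₀ β ν t s := by
  intro t ht s hs
  have hΛ : 0 < 1 - Lam η μ₀ β ν := by linarith
  have hG1 : 0 ≤ G α t s := G_nonneg α t s hα₁ ht hs
  have hG2 : 0 ≤ G α η s := G_nonneg α η s hα₁ ⟨hη.1.le, hη.2.le⟩ hs
  have hg := hgA s hs
  unfold Hker
  have h1 : 0 ≤ β * t / (1 - Lam η μ₀ β ν) :=
    div_nonneg (mul_nonneg hβ ht.1) hΛ.le
  have h2 : 0 ≤ μ₀ * t / (1 - Lam η μ₀ β ν) :=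
    div_nonneg (mul_nonneg hμ ht.1) hΛ.le
  positivity
end

section
/- For all (t,s) ∈ [0,1]×[0,1], the kernel satisfies H(t,s) ≥ ρ(t)·Φ(s). -/
open MeasureTheory Set Filter

lemma rpow_le_self_aux {α x : ℝ} (hα : 2 < α) (hx0 : 0 ≤ x) (hx1 : x ≤ 1) :
    x ^ (α - 1) ≤ x := by
  rcases eq_or_lt_of_le hx0 with h | h
  · rw [← h, Real.zero_rpow (by linarith : α - 1 ≠ 0)]
  · calc x ^ (α - 1) ≤ x ^ (1 : ℝ) :=
        Real.rpow_le_rpow_of_exponent_ge h hx1 (by linarith)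
      _ = x := Real.rpow_one x

lemma G_lower {α t s : ℝ} (hα : 2 < α) (ht : t ∈ Icc (0:ℝ) 1) (hs : s ∈ Icc (0:ℝ) 1) :
    (t - t ^ (α - 1)) * Psi α s ≤ G α t s := by
  obtain ⟨ht0, ht1⟩ := ht
  obtain ⟨hs0, hs1⟩ := hs
  have hΓ : 0 < Real.Gamma α := Real.Gamma_pos_of_pos (by linarith)
  have h1s : (0:ℝ) ≤ 1 - s := by linarith
  unfold G Psi
  split_ifs with h
  · have e1 : (t - t ^ (α - 1)) * ((1 - s) ^ (α - 1) / Real.Gamma α)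
        = ((t - t ^ (α - 1)) * (1 - s) ^ (α - 1)) / Real.Gamma α := by ring
    rw [e1, div_le_div_iff₀ hΓ hΓ]
    have key : (t - s) ^ (α - 1) ≤ t ^ (α - 1) * (1 - s) ^ (α - 1) := by
      rw [← Real.mul_rpow ht0 h1s]
      exact Real.rpow_le_rpow (by linarith) (by nlinarith) (by linarith)
    nlinarith [Real.rpow_nonneg h1s (α - 1)]
  · rw [mul_div_assoc]
    exact mul_le_mul_of_nonneg_right (sub_le_self t (Real.rpow_nonneg ht0 _))
      (div_nonneg (Real.rpow_nonneg h1s _) hΓ.le)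

/-- Lemma 2.7 (ii), lower bound: `ρ(t)·Φ(s) ≤ H(t,s)` on `[0,1] × [0,1]`. -/
theorem Hker_ge_rho_Phi (α η μ₀ β : ℝ) (ν : MeasureTheory.SignedMeasure ℝ)
    (hα₁ : 2 < α) (hα₂ : α ≤ 3) (hη : η ∈ Ioo (0:ℝ) 1) (hμ : 0 ≤ μ₀) (hβ : 0 ≤ β)
    (hΛ₀ : 0 ≤ Lam η μ₀ β ν) (hΛ₁ : Lam η μ₀ β ν < 1)
    (hgA : ∀ s ∈ Icc (0:ℝ) 1, 0 ≤ gA α ν s) :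
    ∀ t ∈ Icc (0:ℝ) 1, ∀ s ∈ Icc (0:ℝ) 1,
      rho α η t * Phi α η μ₀ β ν s ≤ Hker α η μ₀ β ν t s := by
  intro t ht s hs
  obtain ⟨ht0, ht1⟩ := ht
  obtain ⟨hs0, hs1⟩ := hs
  obtain ⟨hη0, hη1⟩ := hη
  set Λ := Lam η μ₀ β ν with hΛdef
  have hD : 0 < 1 - Λ := by linarith
  have hΓ : 0 < Real.Gamma α := Real.Gamma_pos_of_pos (by linarith)
  have hPsi : 0 ≤ Psi α s := div_nonneg (Real.rpow_nonneg (by linarith) _) hΓ.le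
  set a := η - η ^ (α - 1) with hadef
  set b := t - t ^ (α - 1) with hbdef
  have ha0 : 0 ≤ a := by
    have := rpow_le_self_aux hα₁ hη0.le hη1.le; simp [hadef]; linarith
  have ha1 : a ≤ 1 := by
    have := Real.rpow_nonneg hη0.le (α - 1); simp [hadef]; linarith
  have hb0 : 0 ≤ b := by
    have := rpow_le_self_aux hα₁ ht0 ht1; simp [hbdef]; linarith
  have hbt : b ≤ t := by
    have := Real.rpow_nonneg ht0 (α - 1); simp [hbdef]; linarith
  have hGt : b * Psi α s ≤ G α t s := G_lower hα₁ ⟨ht0, ht1⟩ ⟨hs0, hs1⟩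
  have hGη : a * Psi α s ≤ G α η s := G_lower hα₁ ⟨hη0.le, hη1.le⟩ ⟨hs0, hs1⟩
  have hg : 0 ≤ gA α ν s := hgA s ⟨hs0, hs1⟩
  have hA : a * b * (β / (1 - Λ) * gA α ν s) ≤ β * t / (1 - Λ) * gA α ν s := by
    have hab : a * b ≤ t := by nlinarith
    have hc : 0 ≤ β / (1 - Λ) * gA α ν s :=
      mul_nonneg (div_nonneg hβ hD.le) hg
    calc a * b * (β / (1 - Λ) * gA α ν s) ≤ t * (β / (1 - Λ) * gA α ν s) := by
          exact mul_le_mul_of_nonneg_right hab hc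
      _ = β * t / (1 - Λ) * gA α ν s := by ring
  have hB : a * b * (μ₀ / (1 - Λ) * Psi α s) ≤ μ₀ * t / (1 - Λ) * G α η s := by
    have h1 : a * b * Psi α s ≤ t * G α η s := by
      calc a * b * Psi α s = b * (a * Psi α s) := by ring
        _ ≤ t * G α η s := by
          apply mul_le_mul hbt hGη (mul_nonneg ha0 hPsi) (by linarith)
    have hc : 0 ≤ μ₀ / (1 - Λ) := div_nonneg hμ hD.le
    calc a * b * (μ₀ / (1 - Λ) * Psi α s) = μ₀ / (1 - Λ) * (a * b * Psi α s) := by ring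
      _ ≤ μ₀ / (1 - Λ) * (t * G α η s) := mul_le_mul_of_nonneg_left h1 hc
      _ = μ₀ * t / (1 - Λ) * G α η s := by ring
  have hC : a * b * Psi α s ≤ G α t s := by
    calc a * b * Psi α s = a * (b * Psi α s) := by ring
      _ ≤ 1 * (b * Psi α s) :=
        mul_le_mul_of_nonneg_right ha1 (mul_nonneg hb0 hPsi)
      _ = b * Psi α s := by ring
      _ ≤ G α t s := hGt
  have hsplit : (μ₀ - Λ + 1) / (1 - Λ) = μ₀ / (1 - Λ) + 1 := by
    field_simp
    ring
  have hlhs : rho α η t * Phi α η μ₀ β ν s =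
      a * b * (β / (1 - Λ) * gA α ν s) + a * b * (μ₀ / (1 - Λ) * Psi α s)
        + a * b * Psi α s := by
    unfold rho Phi
    rw [← hΛdef, hsplit, ← hadef, ← hbdef]; ring
  unfold Hker
  rw [← hΛdef, hlhs]
  exact add_le_add (add_le_add hA hB) hC
end

section
/- Let 𝟙 ∈ C([0,1],ℝ) denote the constant function 1. Then for every integer n ≥ 1 and every t ∈ [0,1], the n-th iterate of K satisfies (Kⁿ𝟙)(t) ≥ ρ(t)·τ₂·τ₁^(n−1). -/
open MeasureTheory Set Filter

/-! The kernel factors from below: `ρ(t) Φ(s) ≤ H(t,s)` on `[0,1]²`. This follows term by term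
from the Green's function estimate `(t - t^(α-1)) Ψ(s) ≤ G(t,s)`, together with
`0 ≤ η - η^(α-1) ≤ 1` and `t - t^(α-1) ≤ t`. Hence `K𝟙 ≥ τ₂ ρ`, and `u ≥ c ρ` with `c ≥ 0`
gives `Ku ≥ c τ₁ ρ`; induction on `n` finishes. All integrands are continuous (for `g_A` as a
parametric integral of the continuous `G`), so monotonicity of the integral applies. -/

lemma continuous_G {α : ℝ} (hα : 1 < α) : Continuous (Function.uncurry (G α)) := by
  show Continuous fun p : ℝ × ℝ => G α p.1 p.2
  refine Continuous.if_le ?_ ?_ continuous_snd continuous_fst ?_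
  · fun_prop (disch := linarith)
  · fun_prop (disch := linarith)
  · intro p hp
    rw [hp, sub_self, Real.zero_rpow (by linarith), sub_zero]

lemma continuous_stInt_param (ν : SignedMeasure ℝ) {f : ℝ → ℝ → ℝ}
    (hf : Continuous (Function.uncurry f)) :
    Continuous fun s => stInt ν (fun t => f t s) := by
  have hf' : Continuous (Function.uncurry fun s t => f t s) := hf.comp continuous_swap
  exact (continuous_parametric_integral_of_continuous hf' isCompact_Icc).sub
    (continuous_parametric_integral_of_continuous hf' isCompact_Icc)

lemma continuous_gA {α : ℝ} (hα : 1 < α) (ν : SignedMeasure ℝ) : Continuous (gA α ν) :=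
  continuous_stInt_param ν (continuous_G hα)

lemma continuous_Psi {α : ℝ} (hα : 1 ≤ α) : Continuous (Psi α) := by
  unfold Psi
  fun_prop (disch := linarith)

lemma continuous_rho {α : ℝ} (hα : 1 ≤ α) (η : ℝ) : Continuous (rho α η) := by
  unfold rho
  fun_prop (disch := linarith)

lemma Psi_nonneg {α s : ℝ} (hα : 0 < α) (hs : s ≤ 1) : 0 ≤ Psi α s :=
  div_nonneg (Real.rpow_nonneg (by linarith) _) (Real.Gamma_pos_of_pos hα).le

lemma sub_rpow_nonneg {α t : ℝ} (hα : 2 ≤ α) (ht : t ∈ Icc (0:ℝ) 1) : 0 ≤ t - t ^ (α - 1) :=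
  sub_nonneg.2 (Real.rpow_le_self_of_le_one ht.1 ht.2 (by linarith))

lemma sub_rpow_le_self {α t : ℝ} (ht : 0 ≤ t) : t - t ^ (α - 1) ≤ t :=
  sub_le_self _ (Real.rpow_nonneg ht _)

lemma sub_rpow_mul_Psi_le_G {α t s : ℝ} (hα : 1 ≤ α) (ht : t ∈ Icc (0:ℝ) 1)
    (hs : s ∈ Icc (0:ℝ) 1) : (t - t ^ (α - 1)) * Psi α s ≤ G α t s := by
  have hΓ : 0 < Real.Gamma α := Real.Gamma_pos_of_pos (by linarith)
  have hΨ : 0 ≤ (1 - s) ^ (α - 1) := Real.rpow_nonneg (by linarith [hs.2]) _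
  unfold G Psi
  rw [← mul_div_assoc]
  split_ifs with hst
  · gcongr
    -- `t - s ≤ t (1 - s)` because `s t ≤ s`
    have key : (t - s) ^ (α - 1) ≤ t ^ (α - 1) * (1 - s) ^ (α - 1) := by
      rw [← Real.mul_rpow ht.1 (by linarith [hs.2])]
      exact Real.rpow_le_rpow (by linarith) (by nlinarith [hs.1, ht.2]) (by linarith)
    nlinarith
  · gcongr
    nlinarith [Real.rpow_nonneg ht.1 (α - 1)]

lemma rho_nonneg {α η t : ℝ} (hα : 2 ≤ α) (hη : η ∈ Icc (0:ℝ) 1) (ht : t ∈ Icc (0:ℝ) 1) :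
    0 ≤ rho α η t :=
  mul_nonneg (sub_rpow_nonneg hα hη) (sub_rpow_nonneg hα ht)

lemma rho_le {α η t : ℝ} (hα : 2 ≤ α) (hη : η ∈ Icc (0:ℝ) 1) (ht : t ∈ Icc (0:ℝ) 1) :
    rho α η t ≤ t - t ^ (α - 1) :=
  mul_le_of_le_one_left (sub_rpow_nonneg hα ht) ((sub_rpow_le_self hη.1).trans hη.2)

section GreenKernel

variable {α η μ₀ β : ℝ} {ν : SignedMeasure ℝ}

lemma continuous_Phi (hα : 1 < α) : Continuous (Phi α η μ₀ β ν) :=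
  (continuous_const.mul (continuous_gA hα ν)).add (continuous_const.mul (continuous_Psi hα.le))

lemma continuous_Hker (hα : 1 < α) (t : ℝ) : Continuous (Hker α η μ₀ β ν t) :=
  ((continuous_const.mul (continuous_gA hα ν)).add
    (continuous_const.mul ((continuous_G hα).uncurry_left η))).add
    ((continuous_G hα).uncurry_left t)

lemma Phi_eq (hΛ : Lam η μ₀ β ν < 1) (s : ℝ) :
    Phi α η μ₀ β ν s = β / (1 - Lam η μ₀ β ν) * gA α ν s
      + (μ₀ / (1 - Lam η μ₀ β ν) + 1) * Psi α s := by
  have hD : 1 - Lam η μ₀ β ν ≠ 0 := by linarith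
  unfold Phi
  field_simp
  ring

variable (hμ : 0 ≤ μ₀) (hβ : 0 ≤ β) (hΛ : Lam η μ₀ β ν < 1)
include hμ hβ hΛ

lemma Phi_nonneg (hα : 0 < α) {s : ℝ} (hgA : 0 ≤ gA α ν s) (hs : s ≤ 1) :
    0 ≤ Phi α η μ₀ β ν s := by
  have hD : 0 < 1 - Lam η μ₀ β ν := by linarith
  rw [Phi_eq hΛ]
  exact add_nonneg (mul_nonneg (by positivity) hgA) (mul_nonneg (by positivity) (Psi_nonneg hα hs))

lemma rho_mul_Phi_le_Hker (hα : 2 ≤ α) (hη : η ∈ Icc (0:ℝ) 1) {t s : ℝ}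
    (ht : t ∈ Icc (0:ℝ) 1) (hs : s ∈ Icc (0:ℝ) 1) (hgA : 0 ≤ gA α ν s) :
    rho α η t * Phi α η μ₀ β ν s ≤ Hker α η μ₀ β ν t s := by
  set D := 1 - Lam η μ₀ β ν
  have hD : 0 < D := by linarith
  have hΨ : 0 ≤ Psi α s := Psi_nonneg (by linarith) hs.2
  have ha : 0 ≤ η - η ^ (α - 1) := sub_rpow_nonneg hα hη
  have hb : 0 ≤ t - t ^ (α - 1) := sub_rpow_nonneg hα ht
  have h₁ : rho α η t * (β / D * gA α ν s) ≤ t * (β / D * gA α ν s) :=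
    mul_le_mul_of_nonneg_right ((rho_le hα hη ht).trans (sub_rpow_le_self ht.1))
      (mul_nonneg (by positivity) hgA)
  have h₂ : (t - t ^ (α - 1)) * (μ₀ / D * ((η - η ^ (α - 1)) * Psi α s))
      ≤ t * (μ₀ / D * G α η s) :=
    mul_le_mul (sub_rpow_le_self ht.1)
      (mul_le_mul_of_nonneg_left (sub_rpow_mul_Psi_le_G (by linarith) hη hs) (by positivity))
      (mul_nonneg (by positivity) (mul_nonneg ha hΨ)) ht.1
  have h₃ : (η - η ^ (α - 1)) * ((t - t ^ (α - 1)) * Psi α s) ≤ G α t s :=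
    (mul_le_of_le_one_left (mul_nonneg hb hΨ) ((sub_rpow_le_self hη.1).trans hη.2)).trans
      (sub_rpow_mul_Psi_le_G (by linarith) ht hs)
  rw [Phi_eq hΛ]
  unfold Hker
  unfold rho at h₁ ⊢
  linear_combination h₁ + h₂ + h₃

end GreenKernel

section IntegralOperator

variable {k : ℝ → ℝ → ℝ} {r φ : ℝ → ℝ} {K : C(Icc (0:ℝ) 1, ℝ) →L[ℝ] C(Icc (0:ℝ) 1, ℝ)}
  (hK : ∀ u : C(Icc (0:ℝ) 1, ℝ), ∀ t : Icc (0:ℝ) 1,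
    K u t = ∫ s in Icc (0:ℝ) 1, k t s * u (projIcc 0 1 zero_le_one s))
  (hkc : ∀ t, Continuous (k t)) (hφc : Continuous φ)
  (hr : ∀ t ∈ Icc (0:ℝ) 1, 0 ≤ r t) (hφ : ∀ s ∈ Icc (0:ℝ) 1, 0 ≤ φ s)
  (hk : ∀ t ∈ Icc (0:ℝ) 1, ∀ s ∈ Icc (0:ℝ) 1, r t * φ s ≤ k t s)
include hK hkc hφc hr hφ hk

lemma mul_integral_le_apply {u : C(Icc (0:ℝ) 1, ℝ)} {v : ℝ → ℝ} (hvc : Continuous v)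
    (hv : ∀ s ∈ Icc (0:ℝ) 1, 0 ≤ v s) (hvu : ∀ x : Icc (0:ℝ) 1, v x ≤ u x) (t : Icc (0:ℝ) 1) :
    r t * ∫ s in Icc (0:ℝ) 1, v s * φ s ≤ K u t := by
  rw [hK, ← integral_const_mul]
  refine setIntegral_mono_on ((continuous_const.mul (hvc.mul hφc)).integrableOn_Icc)
    (((hkc t).mul (u.continuous.comp continuous_projIcc)).integrableOn_Icc) measurableSet_Icc ?_
  intro s hs
  have hkt : r t * φ s ≤ k t s := hk t t.2 s hs
  have hvus : v s ≤ u (projIcc 0 1 zero_le_one s) := by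
    simpa [projIcc_of_mem _ hs] using hvu ⟨s, hs⟩
  calc r t * (v s * φ s) = r t * φ s * v s := by ring
    _ ≤ k t s * v s := mul_le_mul_of_nonneg_right hkt (hv s hs)
    _ ≤ k t s * u (projIcc 0 1 zero_le_one s) :=
      mul_le_mul_of_nonneg_left hvus ((mul_nonneg (hr t t.2) (hφ s hs)).trans hkt)

lemma mul_integral_mul_pow_le_pow_apply_one (hrc : Continuous r) {n : ℕ} (hn : 1 ≤ n)
    (t : Icc (0:ℝ) 1) :
    r t * (∫ s in Icc (0:ℝ) 1, φ s) * (∫ s in Icc (0:ℝ) 1, r s * φ s) ^ (n - 1)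
      ≤ (K ^ n) 1 t := by
  induction n, hn using Nat.le_induction generalizing t with
  | base =>
    simpa using mul_integral_le_apply hK hkc hφc hr hφ hk continuous_const
      (fun _ _ => zero_le_one) (fun _ => le_rfl) t
  | succ n hn ih =>
    set c := (∫ s in Icc (0:ℝ) 1, φ s) * (∫ s in Icc (0:ℝ) 1, r s * φ s) ^ (n - 1) with hc_def
    have hc : 0 ≤ c := mul_nonneg (setIntegral_nonneg measurableSet_Icc hφ)
      (pow_nonneg (setIntegral_nonneg measurableSet_Icc
        fun s hs => mul_nonneg (hr s hs) (hφ s hs)) _)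
    have h := mul_integral_le_apply hK hkc hφc hr hφ hk (u := (K ^ n) 1) (v := fun s => c * r s)
      (continuous_const.mul hrc) (fun s hs => mul_nonneg hc (hr s hs))
      (fun x => by simpa [c, mul_comm, mul_assoc] using ih x) t
    simp only [mul_assoc, integral_const_mul] at h
    rw [pow_succ', mul_apply_eq_comp]
    calc _ = r t * (c * ∫ s in Icc (0:ℝ) 1, r s * φ s) := by
          rw [hc_def, Nat.add_sub_cancel, ← pow_sub_one_mul (by omega : n ≠ 0)]
          ring
      _ ≤ _ := h

end IntegralOperator

theorem K_iterate_one_ge_general (α η μ₀ β : ℝ) (ν : MeasureTheory.SignedMeasure ℝ)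
    (hα₁ : 2 < α) (hη : η ∈ Ioo (0:ℝ) 1) (hμ : 0 ≤ μ₀) (hβ : 0 ≤ β)
    (hΛ₁ : Lam η μ₀ β ν < 1)
    (hgA : ∀ s ∈ Icc (0:ℝ) 1, 0 ≤ gA α ν s)
    (K : C(Icc (0:ℝ) 1, ℝ) →L[ℝ] C(Icc (0:ℝ) 1, ℝ))
    (hK : ∀ u : C(Icc (0:ℝ) 1, ℝ), ∀ t : Icc (0:ℝ) 1,
      K u t = ∫ s in Icc (0:ℝ) 1, Hker α η μ₀ β ν t s * u (projIcc 0 1 zero_le_one s)) :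
    ∀ n : ℕ, 1 ≤ n → ∀ t : Icc (0:ℝ) 1,
      rho α η t * tau2 α η μ₀ β ν * tau1 α η μ₀ β ν ^ (n - 1)
        ≤ (K ^ n) (1 : C(Icc (0:ℝ) 1, ℝ)) t := by
  have hα : 1 < α := by linarith
  have hηI : η ∈ Icc (0:ℝ) 1 := Ioo_subset_Icc_self hη
  intro n hn t
  exact mul_integral_mul_pow_le_pow_apply_one hK (continuous_Hker hα) (continuous_Phi hα)
    (fun t ht => rho_nonneg hα₁.le hηI ht)
    (fun s hs => Phi_nonneg hμ hβ hΛ₁ (by linarith) (hgA s hs) hs.2)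
    (fun t ht s hs => rho_mul_Phi_le_Hker hμ hβ hΛ₁ hα₁.le hηI ht hs (hgA s hs))
    (continuous_rho hα.le η) hn t

/-- Lower iterate estimate in the proof of Lemma 2.8: for every `n ≥ 1` and `t ∈ [0,1]`,
`(Kⁿ𝟙)(t) ≥ ρ(t)·τ₂·τ₁^(n−1)`, where `𝟙` is the constant function `1`. -/
theorem K_iterate_one_ge (α η μ₀ β : ℝ) (ν : MeasureTheory.SignedMeasure ℝ)
    (hα₁ : 2 < α) (hα₂ : α ≤ 3) (hη : η ∈ Ioo (0:ℝ) 1) (hμ : 0 ≤ μ₀) (hβ : 0 ≤ β)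
    (hΛ₀ : 0 ≤ Lam η μ₀ β ν) (hΛ₁ : Lam η μ₀ β ν < 1)
    (hgA : ∀ s ∈ Icc (0:ℝ) 1, 0 ≤ gA α ν s)
    (K : C(Icc (0:ℝ) 1, ℝ) →L[ℝ] C(Icc (0:ℝ) 1, ℝ))
    (hK : ∀ u : C(Icc (0:ℝ) 1, ℝ), ∀ t : Icc (0:ℝ) 1,
      K u t = ∫ s in Icc (0:ℝ) 1, Hker α η μ₀ β ν t s * u (projIcc 0 1 zero_le_one s)) :
    ∀ n : ℕ, 1 ≤ n → ∀ t : Icc (0:ℝ) 1,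
      rho α η t * tau2 α η μ₀ β ν * tau1 α η μ₀ β ν ^ (n - 1)
        ≤ (K ^ n) (1 : C(Icc (0:ℝ) 1, ℝ)) t :=
  K_iterate_one_ge_general α η μ₀ β ν hα₁ hη hμ hβ hΛ₁ hgA K hK
end

section
/- Let h ∈ C([0,1],ℝ) and define u(t) = ∫₀¹ H(t,s)h(s) ds. Then u is continuous on [0,1], u(0) = 0, and u satisfies the nonlocal boundary condition u(1) = μ₀·u(η) + β·∫₀¹ u(t) dν(t). -/
open MeasureTheory Set Filter

lemma G_eq {α : ℝ} (hα : 1 < α) (t s : ℝ) :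
    G α t s = (t * (1 - s) ^ (α - 1) - max (t - s) 0 ^ (α - 1)) / Real.Gamma α := by
  unfold G
  rcases le_or_gt s t with hst | hst
  · rw [if_pos hst, max_eq_left (sub_nonneg.2 hst)]
  · rw [if_neg (not_le.2 hst), max_eq_right (sub_nonpos.2 hst.le),
      Real.zero_rpow (by linarith), sub_zero]

lemma rpow_cont {α : ℝ} (hα : 1 < α) : Continuous fun x : ℝ => x ^ (α - 1) := by
  rw [continuous_iff_continuousAt]
  intro x
  exact Real.continuousAt_rpow_const x _ (Or.inr (by linarith))

lemma G_cont {α : ℝ} (hα : 1 < α) : Continuous fun p : ℝ × ℝ => G α p.1 p.2 := by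
  simp only [G_eq hα]
  exact ((continuous_fst.mul ((rpow_cont hα).comp (continuous_const.sub continuous_snd))).sub
    ((rpow_cont hα).comp ((continuous_fst.sub continuous_snd).max continuous_const))).div_const _

lemma G_zero_left {α : ℝ} (hα : 1 < α) {s : ℝ} (hs : 0 ≤ s) : G α 0 s = 0 := by
  rw [G_eq hα, max_eq_right (by linarith), Real.zero_rpow (by linarith)]
  ring

lemma G_zero_one {α : ℝ} (hα : 1 < α) {s : ℝ} (hs : s ≤ 1) : G α 1 s = 0 := by
  rw [G_eq hα, max_eq_left (by linarith)]
  ring_nf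

lemma integrableOn_Icc_of_continuousOn' {f : ℝ → ℝ} (μ : Measure ℝ) [IsFiniteMeasure μ]
    (hf : ContinuousOn f (Icc 0 1)) : IntegrableOn f (Icc (0:ℝ) 1) μ := by
  have : IsFiniteMeasureOnCompacts μ := ⟨fun K _ => measure_lt_top μ K⟩
  exact hf.integrableOn_compact isCompact_Icc

/-- Part of Lemma 2.5: for continuous `h`, the function `u(t) = ∫₀¹ H(t,s)h(s) ds` is
continuous on `[0,1]`, vanishes at `0`, and satisfies the nonlocal boundary condition
`u(1) = μ₀·u(η) + β·∫₀¹ u dν`. -/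
theorem solution_boundary_conditions (α η μ₀ β : ℝ) (ν : MeasureTheory.SignedMeasure ℝ)
    (hα₁ : 2 < α) (hα₂ : α ≤ 3) (hη : η ∈ Ioo (0:ℝ) 1) (hμ : 0 ≤ μ₀) (hβ : 0 ≤ β)
    (hΛ : Lam η μ₀ β ν ≠ 1)
    (h : ℝ → ℝ) (hh : ContinuousOn h (Icc (0:ℝ) 1))
    (u : ℝ → ℝ) (hu : ∀ t, u t = ∫ s in Icc (0:ℝ) 1, Hker α η μ₀ β ν t s * h s) :
    ContinuousOn u (Icc (0:ℝ) 1) ∧ u 0 = 0 ∧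
      u 1 = μ₀ * u η + β * stInt ν u := by
  have hα1 : (1:ℝ) < α := by linarith
  obtain ⟨hη0, hη1⟩ := hη
  have h1Λ : (1:ℝ) - Lam η μ₀ β ν ≠ 0 := sub_ne_zero.2 (Ne.symm hΛ)
  set μp := ν.toJordanDecomposition.posPart with hμpdef
  set μn := ν.toJordanDecomposition.negPart with hμndef
  -- extension of h
  set h' : ℝ → ℝ := fun x => h (max 0 (min 1 x)) with hh'def
  have hproj : ∀ x : ℝ, max 0 (min 1 x) ∈ Icc (0:ℝ) 1 := fun x =>
    ⟨le_max_left _ _, max_le zero_le_one (min_le_left _ _)⟩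
  have hh'c : Continuous h' :=
    hh.comp_continuous (continuous_const.max (continuous_const.min continuous_id)) hproj
  have hh'eq : ∀ x ∈ Icc (0:ℝ) 1, h' x = h x := by
    intro x hx
    simp only [hh'def, min_eq_right hx.2, max_eq_right hx.1]
  -- continuity facts about G
  have hGc := G_cont hα1
  have hGt : ∀ s, Continuous fun t => G α t s := fun s =>
    hGc.comp (continuous_id.prodMk continuous_const)
  have hGs : ∀ t, Continuous fun s => G α t s := fun t =>
    hGc.comp (continuous_const.prodMk continuous_id)
  obtain ⟨M, hM⟩ := (isCompact_Icc.prod isCompact_Icc).exists_bound_of_continuousOn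
    hGc.continuousOn
  -- continuity of s ↦ ∫ t, G α t s ∂μ
  have hPN : ∀ (μ : Measure ℝ), IsFiniteMeasure μ →
      ContinuousOn (fun s => ∫ t in Icc (0:ℝ) 1, G α t s ∂μ) (Icc (0:ℝ) 1) := by
    intro μ hfin
    apply continuousOn_of_dominated (bound := fun _ => M)
    · intro s _
      exact (hGt s).aestronglyMeasurable
    · intro s hs
      filter_upwards [ae_restrict_mem measurableSet_Icc] with t ht
      exact hM (t, s) ⟨ht, hs⟩
    · exact integrable_const _
    · exact Eventually.of_forall fun t => (hGs t).continuousOn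
  have hPc := hPN μp inferInstance
  have hNc := hPN μn inferInstance
  have hgAc : ContinuousOn (gA α ν) (Icc (0:ℝ) 1) := by
    have : ∀ s, gA α ν s = (∫ t in Icc (0:ℝ) 1, G α t s ∂μp)
        - ∫ t in Icc (0:ℝ) 1, G α t s ∂μn := fun s => rfl
    exact (hPc.sub hNc).congr fun s _ => this s
  -- the kernel decomposition
  set C : ℝ → ℝ := fun s => β / (1 - Lam η μ₀ β ν) * gA α ν s
      + μ₀ / (1 - Lam η μ₀ β ν) * G α η s with hCdef
  have hCc : ContinuousOn C (Icc (0:ℝ) 1) :=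
    (continuousOn_const.mul hgAc).add (continuousOn_const.mul (hGs η).continuousOn)
  have hHker : ∀ t s, Hker α η μ₀ β ν t s = t * C s + G α t s := by
    intro t s
    simp only [Hker, hCdef]
    ring
  set w : ℝ → ℝ := fun t => ∫ s in Icc (0:ℝ) 1, G α t s * h' s with hwdef
  set IC : ℝ := ∫ s in Icc (0:ℝ) 1, C s * h' s with hICdef
  have hIntCh : IntegrableOn (fun s => C s * h' s) (Icc (0:ℝ) 1) volume :=
    (hCc.mul hh'c.continuousOn).integrableOn_compact isCompact_Icc
  have hIntGh : ∀ t, IntegrableOn (fun s => G α t s * h' s) (Icc (0:ℝ) 1) volume := fun t =>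
    ((hGs t).mul hh'c).continuousOn.integrableOn_compact isCompact_Icc
  have hu' : ∀ t, u t = t * IC + w t := by
    intro t
    rw [hu t]
    have hEq : ∀ s ∈ Icc (0:ℝ) 1,
        Hker α η μ₀ β ν t s * h s = t * (C s * h' s) + G α t s * h' s := by
      intro s hs
      rw [← hh'eq s hs, hHker]
      ring
    rw [setIntegral_congr_fun measurableSet_Icc hEq,
      integral_add (hIntCh.const_mul t) (hIntGh t), integral_const_mul]
  -- continuity of w
  have hwc : ContinuousOn w (Icc (0:ℝ) 1) := by
    apply continuousOn_of_dominated (bound := fun s => M * ‖h' s‖)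
    · intro t _
      exact ((hGs t).mul hh'c).aestronglyMeasurable
    · intro t ht
      filter_upwards [ae_restrict_mem measurableSet_Icc] with s hs
      rw [norm_mul]
      exact mul_le_mul_of_nonneg_right (hM (t, s) ⟨ht, hs⟩) (norm_nonneg _)
    · exact (continuous_const.mul hh'c.norm).continuousOn.integrableOn_compact isCompact_Icc
    · exact Eventually.of_forall fun s => ((hGt s).mul continuous_const).continuousOn
  have hucont : ContinuousOn u (Icc (0:ℝ) 1) :=
    (((continuous_id.mul continuous_const).continuousOn.add hwc)).congr fun t _ => hu' t
  -- u 0 = 0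
  have hw0 : w 0 = 0 := by
    have hEq : ∀ s ∈ Icc (0:ℝ) 1, G α 0 s * h' s = (fun _ : ℝ => (0:ℝ)) s := by
      intro s hs
      rw [G_zero_left hα1 hs.1, zero_mul]
    rw [show w 0 = ∫ s in Icc (0:ℝ) 1, G α 0 s * h' s from rfl,
      setIntegral_congr_fun measurableSet_Icc hEq, integral_zero]
  have hu0 : u 0 = 0 := by rw [hu' 0, hw0, zero_mul, zero_add]
  -- w 1 = 0
  have hw1 : w 1 = 0 := by
    have hEq : ∀ s ∈ Icc (0:ℝ) 1, G α 1 s * h' s = (fun _ : ℝ => (0:ℝ)) s := by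
      intro s hs
      rw [G_zero_one hα1 hs.2, zero_mul]
    rw [show w 1 = ∫ s in Icc (0:ℝ) 1, G α 1 s * h' s from rfl,
      setIntegral_congr_fun measurableSet_Icc hEq, integral_zero]
  -- Fubini
  have hswap : ∀ (μ : Measure ℝ), IsFiniteMeasure μ →
      (∫ t in Icc (0:ℝ) 1, w t ∂μ) =
        ∫ s in Icc (0:ℝ) 1, (∫ t in Icc (0:ℝ) 1, G α t s ∂μ) * h' s := by
    intro μ hfin
    obtain ⟨Mh, hMh⟩ := isCompact_Icc.exists_bound_of_continuousOn hh'c.continuousOn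
    have hM0 : 0 ≤ M :=
      (norm_nonneg (G α 0 0)).trans (hM ((0:ℝ), (0:ℝ))
        ⟨⟨le_refl 0, zero_le_one⟩, ⟨le_refl 0, zero_le_one⟩⟩)
    have hint : Integrable (Function.uncurry fun t s => G α t s * h' s)
        ((μ.restrict (Icc (0:ℝ) 1)).prod (volume.restrict (Icc (0:ℝ) 1))) := by
      apply Integrable.mono' (g := fun _ => M * Mh) (integrable_const _)
        ((hGc.mul (hh'c.comp continuous_snd)).aestronglyMeasurable)
      rw [Measure.prod_restrict]
      filter_upwards [ae_restrict_mem (measurableSet_Icc.prod measurableSet_Icc)] with p hp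
      calc ‖G α p.1 p.2 * h' p.2‖ = ‖G α p.1 p.2‖ * ‖h' p.2‖ := norm_mul _ _
        _ ≤ M * Mh := mul_le_mul (hM p hp) (hMh p.2 hp.2) (norm_nonneg _) hM0
    calc (∫ t in Icc (0:ℝ) 1, w t ∂μ)
        = ∫ t in Icc (0:ℝ) 1, (∫ s in Icc (0:ℝ) 1, G α t s * h' s) ∂μ := rfl
      _ = ∫ s in Icc (0:ℝ) 1, (∫ t in Icc (0:ℝ) 1, G α t s * h' s ∂μ) :=
          integral_integral_swap hint
      _ = ∫ s in Icc (0:ℝ) 1, (∫ t in Icc (0:ℝ) 1, G α t s ∂μ) * h' s := by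
          refine setIntegral_congr_fun measurableSet_Icc fun s _ => ?_
          exact integral_mul_const _ _
  -- splitting stInt ν u
  have hstIntu : stInt ν u = IC * stInt ν (fun t => t) + stInt ν w := by
    have hrw : ∀ (μ : Measure ℝ), IsFiniteMeasure μ →
        (∫ t in Icc (0:ℝ) 1, u t ∂μ) =
          IC * (∫ t in Icc (0:ℝ) 1, t ∂μ) + ∫ t in Icc (0:ℝ) 1, w t ∂μ := by
      intro μ hfin
      have hEq : ∀ t ∈ Icc (0:ℝ) 1, u t = t * IC + w t := fun t _ => hu' t
      have h1 : IntegrableOn (fun t : ℝ => t * IC) (Icc (0:ℝ) 1) μ :=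
        integrableOn_Icc_of_continuousOn' μ (continuous_id.mul continuous_const).continuousOn
      rw [setIntegral_congr_fun measurableSet_Icc hEq,
        integral_add h1 (integrableOn_Icc_of_continuousOn' μ hwc),
        integral_mul_const]
      ring
    show (∫ t in Icc (0:ℝ) 1, u t ∂μp) - (∫ t in Icc (0:ℝ) 1, u t ∂μn) = _
    rw [hrw μp inferInstance, hrw μn inferInstance]
    show _ = IC * ((∫ t in Icc (0:ℝ) 1, t ∂μp) - ∫ t in Icc (0:ℝ) 1, t ∂μn)
      + ((∫ t in Icc (0:ℝ) 1, w t ∂μp) - ∫ t in Icc (0:ℝ) 1, w t ∂μn)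
    ring
  -- stInt ν w = ∫ gA·h'
  have hJint : IntegrableOn (fun s => gA α ν s * h' s) (Icc (0:ℝ) 1) volume :=
    (hgAc.mul hh'c.continuousOn).integrableOn_compact isCompact_Icc
  have hPint : IntegrableOn (fun s => (∫ t in Icc (0:ℝ) 1, G α t s ∂μp) * h' s)
      (Icc (0:ℝ) 1) volume :=
    (hPc.mul hh'c.continuousOn).integrableOn_compact isCompact_Icc
  have hNint : IntegrableOn (fun s => (∫ t in Icc (0:ℝ) 1, G α t s ∂μn) * h' s)
      (Icc (0:ℝ) 1) volume :=
    (hNc.mul hh'c.continuousOn).integrableOn_compact isCompact_Icc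
  have hSw : stInt ν w = ∫ s in Icc (0:ℝ) 1, gA α ν s * h' s := by
    show (∫ t in Icc (0:ℝ) 1, w t ∂μp) - (∫ t in Icc (0:ℝ) 1, w t ∂μn) = _
    rw [hswap μp inferInstance, hswap μn inferInstance, ← integral_sub hPint hNint]
    refine setIntegral_congr_fun measurableSet_Icc fun s _ => ?_
    show _ = gA α ν s * h' s
    have : gA α ν s = (∫ t in Icc (0:ℝ) 1, G α t s ∂μp)
        - ∫ t in Icc (0:ℝ) 1, G α t s ∂μn := rfl
    rw [this]
    ring
  -- value of IC
  have hICval : IC = β / (1 - Lam η μ₀ β ν) * (∫ s in Icc (0:ℝ) 1, gA α ν s * h' s)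
      + μ₀ / (1 - Lam η μ₀ β ν) * w η := by
    have hEq : ∀ s ∈ Icc (0:ℝ) 1, C s * h' s =
        β / (1 - Lam η μ₀ β ν) * (gA α ν s * h' s)
          + μ₀ / (1 - Lam η μ₀ β ν) * (G α η s * h' s) := by
      intro s _
      simp only [hCdef]
      ring
    rw [hICdef, setIntegral_congr_fun measurableSet_Icc hEq,
      integral_add (hJint.const_mul _) ((hIntGh η).const_mul _),
      integral_const_mul, integral_const_mul]
  have hICmul : (1 - (μ₀ * η + β * stInt ν (fun t => t))) * IC =
      β * (∫ s in Icc (0:ℝ) 1, gA α ν s * h' s) + μ₀ * w η := by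
    have hL : Lam η μ₀ β ν = μ₀ * η + β * stInt ν (fun t => t) := rfl
    rw [← hL, hICval]
    field_simp
  refine ⟨hucont, hu0, ?_⟩
  rw [hu' 1, hu' η, hstIntu, hSw, hw1]
  linear_combination hICmul
end

section
/- Define g : [0,1] → ℝ by g(s) = (1/Γ(5/2))·((2/7)(1−s)^(3/2) − 2(3/7 − s)^(3/2) + (4/7 − s)^(3/2)) for 0 ≤ s < 3/7, g(s) = (1/Γ(5/2))·((2/7)(1−s)^(3/2) + (4/7 − s)^(3/2)) for 3/7 ≤ s < 4/7, and g(s) = (1/Γ(5/2))·(2/7)(1−s)^(3/2) for 4/7 ≤ s ≤ 1. Then g(s) ≥ 0 for all s ∈ [0,1]. -/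
open Real

lemma convex_mid32 {x y : ℝ} (hx : 0 ≤ x) (hy : 0 ≤ y) :
    2 * ((x + y)/2) ^ ((3:ℝ)/2) ≤ x ^ ((3:ℝ)/2) + y ^ ((3:ℝ)/2) := by
  have h := (convexOn_rpow (p := 3/2) (by norm_num)).2 (Set.mem_Ici.2 hx)
    (Set.mem_Ici.2 hy) (by norm_num : (0:ℝ) ≤ 1/2) (by norm_num : (0:ℝ) ≤ 1/2) (by norm_num)
  simp only [smul_eq_mul] at h
  have hx2 : (1/2 : ℝ) * x + 1/2 * y = (x + y) / 2 := by ring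
  rw [hx2] at h
  linarith

lemma pow32_scale (c : ℝ) (hc : 0 ≤ c) {t : ℝ} (ht : 0 ≤ t) :
    (c ^ ((2:ℝ)/3) * t) ^ ((3:ℝ)/2) = c * t ^ ((3:ℝ)/2) := by
  rw [Real.mul_rpow (Real.rpow_nonneg hc _) ht, ← Real.rpow_mul hc,
    show (2:ℝ)/3 * (3/2) = 1 by norm_num, Real.rpow_one]

lemma key1 {s : ℝ} (h0 : 0 ≤ s) (h : s ≤ 2/7) :
    2 * (3/7 - s) ^ ((3:ℝ)/2) ≤ (2/7) * (1 - s) ^ ((3:ℝ)/2) + (4/7 - s) ^ ((3:ℝ)/2) := by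
  have ha : (0:ℝ) ≤ 2/7 - s := by linarith
  have hb : (0:ℝ) ≤ 4/7 - s := by linarith
  have hmid : (3/7 - s : ℝ) = ((2/7 - s) + (4/7 - s)) / 2 := by ring
  have h1 := convex_mid32 ha hb
  rw [← hmid] at h1
  -- now bound (2/7 - s)^(3/2) ≤ (2/7)*(1-s)^(3/2)
  have hc : ((2:ℝ)/7) ^ ((2:ℝ)/3) ≤ 1 := Real.rpow_le_one (by norm_num) (by norm_num) (by norm_num)
  have hc2 : (2:ℝ)/7 ≤ ((2:ℝ)/7) ^ ((2:ℝ)/3) := by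
    calc (2:ℝ)/7 = ((2:ℝ)/7) ^ ((1:ℝ)) := by rw [Real.rpow_one]
    _ ≤ ((2:ℝ)/7) ^ ((2:ℝ)/3) :=
      Real.rpow_le_rpow_of_exponent_ge (by norm_num) (by norm_num) (by norm_num)
  have hle : (2/7 - s : ℝ) ≤ ((2:ℝ)/7) ^ ((2:ℝ)/3) * (1 - s) := by nlinarith
  have h2 : (2/7 - s : ℝ) ^ ((3:ℝ)/2) ≤ (((2:ℝ)/7) ^ ((2:ℝ)/3) * (1 - s)) ^ ((3:ℝ)/2) :=
    Real.rpow_le_rpow ha hle (by norm_num)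
  rw [pow32_scale (2/7) (by norm_num) (by linarith : (0:ℝ) ≤ 1 - s)] at h2
  linarith

lemma pow4_32 : (4:ℝ) ^ ((3:ℝ)/2) = 8 := by
  have : (4:ℝ) = (2:ℝ) ^ (2:ℝ) := by
    rw [show (2:ℝ) = ((2:ℕ):ℝ) by norm_num, Real.rpow_natCast]; norm_num
  rw [this, ← Real.rpow_mul (by norm_num), show (2:ℝ) * (3/2) = 3 by norm_num,
    show (3:ℝ) = ((3:ℕ):ℝ) by norm_num, Real.rpow_natCast]; norm_num

lemma key2 {s : ℝ} (h0 : 2/7 ≤ s) (h : s ≤ 3/7) :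
    2 * (3/7 - s) ^ ((3:ℝ)/2) ≤ (2/7) * (1 - s) ^ ((3:ℝ)/2) := by
  have h1 : (3/7 - s : ℝ) ^ ((3:ℝ)/2) ≤ ((1:ℝ)/7) ^ ((3:ℝ)/2) :=
    Real.rpow_le_rpow (by linarith) (by linarith) (by norm_num)
  have h2 : ((4:ℝ)/7) ^ ((3:ℝ)/2) ≤ (1 - s) ^ ((3:ℝ)/2) :=
    Real.rpow_le_rpow (by norm_num) (by linarith) (by norm_num)
  have h3 : ((4:ℝ)/7) ^ ((3:ℝ)/2) = 8 * ((1:ℝ)/7) ^ ((3:ℝ)/2) := by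
    rw [show (4:ℝ)/7 = 4 * (1/7) by norm_num,
      Real.mul_rpow (by norm_num) (by norm_num), pow4_32]
  nlinarith [Real.rpow_nonneg (show (0:ℝ) ≤ 1/7 by norm_num) ((3:ℝ)/2)]

/-- The function `g_A` arising in the example (with `α = 5/2` and the given
bounded-variation integrator `A`). -/
noncomputable def gExample (s : ℝ) : ℝ :=
  if s < 3 / 7 then
    (1 / Real.Gamma (5 / 2)) *
      ((2 / 7) * (1 - s) ^ ((3:ℝ) / 2) - 2 * (3 / 7 - s) ^ ((3:ℝ) / 2)
        + (4 / 7 - s) ^ ((3:ℝ) / 2))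
  else if s < 4 / 7 then
    (1 / Real.Gamma (5 / 2)) *
      ((2 / 7) * (1 - s) ^ ((3:ℝ) / 2) + (4 / 7 - s) ^ ((3:ℝ) / 2))
  else
    (1 / Real.Gamma (5 / 2)) * ((2 / 7) * (1 - s) ^ ((3:ℝ) / 2))

/-- Hypothesis (H2) for the example: `g_A(s) ≥ 0` on `[0,1]`. -/
theorem example_gA_nonneg : ∀ s ∈ Set.Icc (0:ℝ) 1, 0 ≤ gExample s := by
  rintro s ⟨hs0, hs1⟩
  have hΓ : 0 < Real.Gamma (5/2) := Real.Gamma_pos_of_pos (by norm_num)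
  have hΓ' : (0:ℝ) ≤ 1 / Real.Gamma (5/2) := by positivity
  unfold gExample
  split_ifs with h1 h2
  · apply mul_nonneg hΓ'
    rcases le_or_gt s (2/7) with h | h
    · have := key1 hs0 h; linarith
    · have h5 := key2 h.le h1.le
      have h6 := Real.rpow_nonneg (show (0:ℝ) ≤ 4/7 - s by linarith) ((3:ℝ)/2)
      linarith
  · apply mul_nonneg hΓ'
    have h5 := Real.rpow_nonneg (show (0:ℝ) ≤ 1 - s by linarith) ((3:ℝ)/2)
    have h6 := Real.rpow_nonneg (show (0:ℝ) ≤ 4/7 - s by linarith) ((3:ℝ)/2)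
    linarith
  · apply mul_nonneg hΓ'
    have h5 := Real.rpow_nonneg (show (0:ℝ) ≤ 1 - s by linarith) ((3:ℝ)/2)
    linarith
end
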